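/- For an m-qubit GHZ state corrupted by the quantum depolarizing channel with noise strength p (where independently on each qubit, I is applied with probability 1-3p/4 and each of X, Y, Z with probability p/4), the fidelity with the original GHZ state equals Σ_{k even, 0≤k≤m} C(m,k) (p/4)^k (1-3p/4)^(m-k) + 2^(m-1) (p/4)^m. -/

import Mathlib

open Finset

/-- The Pauli matrices, indexed so that `0 ↦ I`, `1 ↦ X`, `2 ↦ Y`, `3 ↦ Z`. -/
noncomputable def pauli : Fin 4 → Matrix (Fin 2) (Fin 2) ℂ :=
  ![1, !![0, 1; 1, 0], !![0, -Complex.I; Complex.I, 0], !![1, 0; 0, -1]]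

/-- The `m`-qubit GHZ state `(|0⟩^⊗m + |1⟩^⊗m)/√2`, as a vector indexed by
bit strings `Fin m → Fin 2`. -/
noncomputable def ghz (m : ℕ) : (Fin m → Fin 2) → ℂ :=
  fun x => if x = (fun _ => 0) ∨ x = (fun _ => 1) then ((Real.sqrt 2)⁻¹ : ℝ) else 0

/-- Application of the tensor product `P_{e 0} ⊗ ⋯ ⊗ P_{e (m-1)}` of Pauli matrices
(one acting on each qubit) to an `m`-qubit state vector. -/
noncomputable def applyPauli {m : ℕ} (e : Fin m → Fin 4) (v : (Fin m → Fin 2) → ℂ) :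
    (Fin m → Fin 2) → ℂ :=
  fun x => ∑ y : Fin m → Fin 2, (∏ j, pauli (e j) (x j) (y j)) * v y

/-- The probability that a given qubit receives the Pauli error `k` in the depolarizing
channel of strength `p`: `1 - 3p/4` for `I` and `p/4` for each of `X`, `Y`, `Z`. -/
noncomputable def depProb (p : ℝ) (k : Fin 4) : ℝ := if k = 0 then 1 - 3 * p / 4 else p / 4

/-!
Writing `|GHZ⟩ = (|0…0⟩ + |1…1⟩)/√2`, the amplitude `⟨GHZ|P_e|GHZ⟩` is `1/2` times the sum over
`(b, c) ∈ {0,1}²` of the products `∏ⱼ (P_{e j})_{b c}`. Expanding `|·|²` as a double sum over such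
pairs `u, v`, the probability-weighted sum over error patterns `e` factorises qubit by qubit into
`∑_{u,v} T(u,v)^m` for the single-qubit transfer matrix
`T(u,v) = ∑ₖ depProb p k · (Pₖ)_u · conj (Pₖ)_v`. Only six of its entries are nonzero, which gives
`2 (a+b)^m + 2 (a-b)^m + 2 (2b)^m` with `a = 1 - 3p/4`, `b = p/4`, and the even-index part of the
binomial expansion of `(a+b)^m` is `((a+b)^m + (a-b)^m)/2`.
-/

open Matrix ComplexConjugate

theorem sum_prod_mul_normSq_sum_prod {ι α β : Type*} [Fintype ι] [DecidableEq ι] [Fintype α]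
    [Fintype β] (w : α → ℝ) (f : α → β → ℂ) :
    ((∑ e : ι → α, (∏ j, w (e j)) * Complex.normSq (∑ u, ∏ j, f (e j) u) : ℝ) : ℂ) =
      ∑ u, ∑ v, (∑ k, (w k : ℂ) * f k u * conj (f k v)) ^ Fintype.card ι := by
  have sum_pow (g : α → ℂ) : (∑ k, g k) ^ Fintype.card ι = ∑ e : ι → α, ∏ j, g (e j) := by
    rw [← Finset.card_univ, ← Finset.prod_const, Fintype.prod_sum]
  simp_rw [sum_pow, Finset.prod_mul_distrib]
  push_cast
  simp_rw [← Complex.mul_conj, map_sum, map_prod, Finset.sum_mul_sum, Finset.mul_sum]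
  rw [Finset.sum_comm]
  refine Finset.sum_congr rfl fun u _ => ?_
  rw [Finset.sum_comm]
  exact Finset.sum_congr rfl fun v _ => Finset.sum_congr rfl fun e _ => by ring

theorem two_mul_sum_even_choose {R : Type*} [CommRing R] (m : ℕ) (a b : R) :
    2 * ∑ k ∈ (range (m + 1)).filter Even, (m.choose k : R) * b ^ k * a ^ (m - k) =
      (a + b) ^ m + (a - b) ^ m := by
  rw [sub_eq_add_neg, add_comm a, add_comm a, add_pow, add_pow, ← Finset.sum_add_distrib,
    Finset.sum_filter, Finset.mul_sum]
  refine Finset.sum_congr rfl fun k _ => ?_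
  rcases Nat.even_or_odd k with hk | hk
  · rw [if_pos hk, hk.neg_pow]; ring
  · rw [if_neg (Nat.not_even_iff_odd.mpr hk), hk.neg_pow]; ring

theorem ghz_eq_sum_single {m : ℕ} (hm : m ≠ 0) :
    ghz m = ∑ b : Fin 2, Pi.single (fun _ => b) (((√2)⁻¹ : ℝ) : ℂ) := by
  have hne : (fun _ : Fin m => (0 : Fin 2)) ≠ fun _ => 1 := fun h =>
    absurd (congrFun h ⟨0, Nat.pos_of_ne_zero hm⟩) (by decide)
  ext x
  by_cases h0 : x = fun _ => 0
  · subst h0; simp [ghz, Pi.single_apply, hne]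
  by_cases h1 : x = fun _ => 1
  · subst h1; simp [ghz, Pi.single_apply, hne.symm]
  simp [ghz, Pi.single_apply, h0, h1]

theorem star_ghz_dotProduct_mulVec_ghz {m : ℕ} (hm : m ≠ 0)
    (A : Matrix (Fin m → Fin 2) (Fin m → Fin 2) ℂ) :
    star (ghz m) ⬝ᵥ (A *ᵥ ghz m) = (1 / 2 : ℂ) * ∑ b, ∑ c, A (fun _ => b) (fun _ => c) := by
  have h : ((√2 : ℂ))⁻¹ * ((√2 : ℂ))⁻¹ = 1 / 2 := by
    rw [← mul_inv, ← Complex.ofReal_mul, Real.mul_self_sqrt zero_le_two]; norm_num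
  simp [ghz_eq_sum_single hm, Pi.star_single, Matrix.mulVec_add, Fin.sum_univ_two]
  linear_combination (A (fun _ => 0) (fun _ => 0) + A (fun _ => 0) (fun _ => 1) +
    A (fun _ => 1) (fun _ => 0) + A (fun _ => 1) (fun _ => 1)) * h

theorem star_ghz_dotProduct_applyPauli_ghz {m : ℕ} (hm : m ≠ 0) (e : Fin m → Fin 4) :
    star (ghz m) ⬝ᵥ applyPauli e (ghz m) =
      (1 / 2 : ℂ) * ∑ u : Fin 2 × Fin 2, ∏ j, pauli (e j) u.1 u.2 := by
  rw [Fintype.sum_prod_type]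
  exact star_ghz_dotProduct_mulVec_ghz hm (Matrix.of fun x y => ∏ j, pauli (e j) (x j) (y j))

theorem sum_sum_depolarizing_transfer_pow {m : ℕ} (hm : m ≠ 0) (p : ℝ) :
    ∑ u : Fin 2 × Fin 2, ∑ v : Fin 2 × Fin 2,
        (∑ k, (depProb p k : ℂ) * pauli k u.1 u.2 * conj (pauli k v.1 v.2)) ^ m =
      ((2 * ((1 - 3 * p / 4) + p / 4) ^ m + 2 * ((1 - 3 * p / 4) - p / 4) ^ m
        + 2 * (2 * (p / 4)) ^ m : ℝ) : ℂ) := by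
  simp [Fintype.sum_prod_type, Fin.sum_univ_two, Fin.sum_univ_four, pauli, depProb,
    Matrix.one_apply]
  ring_nf
  simp [zero_pow hm]
  ring_nf
  simp only [one_div]

theorem depolarizing_ghz_fidelity_general (m : ℕ) (hm : 1 ≤ m) (p : ℝ) :
    ∑ e : Fin m → Fin 4, (∏ j, depProb p (e j)) *
        Complex.normSq (dotProduct (star (ghz m)) (applyPauli e (ghz m))) =
      (∑ k ∈ (Finset.range (m + 1)).filter (fun k => Even k),
          (m.choose k : ℝ) * (p / 4) ^ k * (1 - 3 * p / 4) ^ (m - k)) +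
        2 ^ (m - 1) * (p / 4) ^ m := by
  have hm0 : m ≠ 0 := by omega
  have hamp (e : Fin m → Fin 4) :
      Complex.normSq (star (ghz m) ⬝ᵥ applyPauli e (ghz m)) =
        Complex.normSq (∑ u : Fin 2 × Fin 2, ∏ j, pauli (e j) u.1 u.2) / 4 := by
    rw [star_ghz_dotProduct_applyPauli_ghz hm0, Complex.normSq_mul]
    norm_num
    ring
  have hbin := two_mul_sum_even_choose m (1 - 3 * p / 4) (p / 4)
  have hpow : (2 : ℝ) ^ m = 2 * 2 ^ (m - 1) := by rw [← pow_succ', Nat.sub_add_cancel hm]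
  simp_rw [hamp, mul_div_assoc', ← Finset.sum_div]
  apply Complex.ofReal_injective
  rw [Complex.ofReal_div,
    sum_prod_mul_normSq_sum_prod (depProb p) (fun k (u : Fin 2 × Fin 2) => pauli k u.1 u.2),
    Fintype.card_fin, sum_sum_depolarizing_transfer_pow hm0,
    ← Complex.ofReal_div]
  congr 1
  rw [mul_pow, hpow]
  linear_combination (-1 / 2 : ℝ) * hbin

/-- For an `m`-qubit GHZ state corrupted by the quantum depolarizing channel with noise
strength `p` (independently on each qubit, `I` with probability `1 - 3p/4`, and each of
`X`, `Y`, `Z` with probability `p/4`), the fidelity with the original GHZ state equals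
`∑_{k even, 0 ≤ k ≤ m} C(m,k) (p/4)^k (1 - 3p/4)^(m-k) + 2^(m-1) (p/4)^m`. -/
theorem depolarizing_ghz_fidelity (m : ℕ) (hm : 1 ≤ m) (p : ℝ) (hp0 : 0 ≤ p) (hp1 : p ≤ 1) :
    ∑ e : Fin m → Fin 4, (∏ j, depProb p (e j)) *
        Complex.normSq (dotProduct (star (ghz m)) (applyPauli e (ghz m))) =
      (∑ k ∈ (Finset.range (m + 1)).filter (fun k => Even k),
          (m.choose k : ℝ) * (p / 4) ^ k * (1 - 3 * p / 4) ^ (m - k)) +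
        2 ^ (m - 1) * (p / 4) ^ m :=
  depolarizing_ghz_fidelity_general m hm p
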